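/- arXiv:1506.06723 — 3 statements merged into one kernel-verified Lean document; each statement's English description precedes it below -/
import Mathlib

section
/- Let G : ℝ → (0,∞) satisfy G(x) = O(⟨x⟩^{-m}) with m > 3. Then for every k in the closed upper half-plane with k ≠ 0 (and also k = 0), the operator b(k) on L²(ℝ) with integral kernel G(x)^{1/2} · (1 − e^{ik|x−y|})/(2ik) · G(y)^{1/2} is Hilbert–Schmidt, and the map k ↦ b(k) is continuous on {k : Im(k) ≥ 0} with values in the Hilbert–Schmidt class, where b(0) has kernel G(x)^{1/2} (−|x−y|/2) G(y)^{1/2}. -/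
/-!
Writing `t = |x − y|`, the kernel is `−√G(x) √G(y) (t/2) · φ(ikt)` with `φ = dslope exp 0`, i.e.
`φ(w) = (e^w − 1)/w`, `φ(0) = 1`. Since `φ` is entire and `|φ(w)| ≤ 1` for `Re w ≤ 0`, the kernels
are continuous in `k` pointwise and dominated, uniformly on `Im k ≥ 0`, by `√G(x) √G(y) |x − y|/2`.
This majorant is in `L²(ℝ²)` because `|x − y|² ≤ 2⟨x⟩²⟨y⟩²` and `G(x)⟨x⟩² = O(⟨x⟩^{2−m})` is
integrable for `m > 3`. Dominated convergence in `L²` then gives continuity of `k ↦ b(k)`.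
-/

open MeasureTheory Complex
open scoped ENNReal
open Filter Topology

/-- The integral kernel of `b(k)`: for `k ≠ 0` it is
`√G(x) · (1 − e^{ik|x−y|})/(2ik) · √G(y)`, and for `k = 0` it is `√G(x)·(−|x−y|/2)·√G(y)`. -/
noncomputable def bKernel (G : ℝ → ℝ) (k : ℂ) (p : ℝ × ℝ) : ℂ :=
  if k = 0 then
    (Real.sqrt (G p.1) : ℂ) * (-(|p.1 - p.2| : ℝ) / 2) * (Real.sqrt (G p.2) : ℂ)
  else
    (Real.sqrt (G p.1) : ℂ) *
      ((1 - Complex.exp (Complex.I * k * |p.1 - p.2|)) / (2 * Complex.I * k)) *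
      (Real.sqrt (G p.2) : ℂ)

section DominatedLp

variable {α E : Type*} [MeasurableSpace α] [NormedAddCommGroup E] {μ : Measure α} {p : ℝ≥0∞}

theorem tendsto_eLpNorm_sub_of_dominated {ι : Type*} {l : Filter ι} [l.IsCountablyGenerated]
    (hp0 : p ≠ 0) (hp : p ≠ ∞) {F : ι → α → E} {f : α → E} {g : α → ℝ} (hg : MemLp g p μ)
    (hF_meas : ∀ᶠ i in l, AEStronglyMeasurable (F i) μ) (hf_meas : AEStronglyMeasurable f μ)
    (h_bound : ∀ᶠ i in l, ∀ᵐ a ∂μ, ‖F i a‖ ≤ g a) (hf_bound : ∀ᵐ a ∂μ, ‖f a‖ ≤ g a)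
    (h_lim : ∀ᵐ a ∂μ, Tendsto (fun i => F i a) l (𝓝 (f a))) :
    Tendsto (fun i => eLpNorm (F i - f) p μ) l (𝓝 0) := by
  have hq : 0 < p.toReal := ENNReal.toReal_pos hp0 hp
  simp_rw [eLpNorm_eq_lintegral_rpow_enorm_toReal hp0 hp]
  have h_int : Tendsto (fun i => ∫⁻ a, ‖(F i - f) a‖ₑ ^ p.toReal ∂μ) l (𝓝 0) := by
    have h_fin : ∫⁻ a, (2 * ‖g a‖ₑ) ^ p.toReal ∂μ ≠ ∞ := by
      simp_rw [ENNReal.mul_rpow_of_nonneg _ _ hq.le]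
      rw [lintegral_const_mul' _ _ (by simp)]
      exact ENNReal.mul_ne_top (by simp)
        (lintegral_rpow_enorm_lt_top_of_eLpNorm_lt_top hp0 hp hg.eLpNorm_lt_top).ne
    simpa using tendsto_lintegral_filter_of_dominated_convergence'
      (F := fun i a => ‖(F i - f) a‖ₑ ^ p.toReal) (f := fun _ => 0) _
      (hF_meas.mono fun i hi => ((hi.sub hf_meas).enorm.pow_const _))
      (h_bound.mono fun i hi => by
        filter_upwards [hi, hf_bound] with a hFa hfa
        refine ENNReal.rpow_le_rpow ?_ hq.le
        calc ‖(F i - f) a‖ₑ ≤ ‖F i a‖ₑ + ‖f a‖ₑ := enorm_sub_le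
          _ ≤ ‖g a‖ₑ + ‖g a‖ₑ := add_le_add
            (enorm_le_iff_norm_le.2 (hFa.trans (Real.le_norm_self _)))
            (enorm_le_iff_norm_le.2 (hfa.trans (Real.le_norm_self _)))
          _ = 2 * ‖g a‖ₑ := (two_mul _).symm)
      h_fin
      (h_lim.mono fun a ha => by
        have := ((ha.sub_const (f a)).enorm).ennrpow_const p.toReal
        simpa [ENNReal.zero_rpow_of_pos hq] using this)
  simpa [ENNReal.zero_rpow_of_pos (inv_pos.2 hq)] using
    h_int.ennrpow_const (1 / p.toReal)

theorem exists_continuousOn_Lp_of_dominated {X : Type*} [TopologicalSpace X]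
    [FirstCountableTopology X] [Fact (1 ≤ p)] (hp : p ≠ ∞) {F : X → α → E} {s : Set X}
    {g : α → ℝ} (hg : MemLp g p μ) (hF_meas : ∀ x ∈ s, AEStronglyMeasurable (F x) μ)
    (h_bound : ∀ x ∈ s, ∀ᵐ a ∂μ, ‖F x a‖ ≤ g a)
    (h_cont : ∀ᵐ a ∂μ, ContinuousOn (fun x => F x a) s) :
    ∃ F' : X → Lp E p μ, (∀ x ∈ s, F' x =ᵐ[μ] F x) ∧ ContinuousOn F' s := by
  have hmem : ∀ x ∈ s, MemLp (F x) p μ := fun x hx => hg.mono' (hF_meas x hx) (h_bound x hx)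
  classical
  refine ⟨fun x => if hx : x ∈ s then (hmem x hx).toLp else 0, fun x hx => ?_, fun x₀ hx₀ => ?_⟩
  · simpa only [dif_pos hx] using (hmem x hx).coeFn_toLp
  · rw [ContinuousWithinAt, dif_pos hx₀]
    refine Lp.tendsto_Lp_of_tendsto_eLpNorm _ _ ?_
    refine (tendsto_eLpNorm_sub_of_dominated (one_pos.trans_le Fact.out).ne' hp hg
      (eventually_nhdsWithin_of_forall hF_meas) (hF_meas x₀ hx₀)
      (eventually_nhdsWithin_of_forall h_bound) (h_bound x₀ hx₀)
      (h_cont.mono fun a ha => ha x₀ hx₀)).congr' ?_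
    filter_upwards [self_mem_nhdsWithin] with x hx
    refine eLpNorm_congr_ae ((?_ : _ =ᵐ[μ] _).sub EventuallyEq.rfl)
    simpa only [dif_pos hx] using ((hmem x hx).coeFn_toLp).symm

end DominatedLp

theorem Complex.norm_exp_sub_one_le_of_re_nonpos {z : ℂ} (hz : z.re ≤ 0) :
    ‖exp z - 1‖ ≤ ‖z‖ := by
  have h := (convex_halfSpace_re_le (0 : ℝ)).norm_image_sub_le_of_norm_deriv_le (C := 1)
    (fun w _ => differentiableAt_exp) (fun w hw => by simpa [norm_exp] using hw)
    (show (0 : ℂ).re ≤ 0 by simp) hz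
  simpa using h

theorem Complex.norm_dslope_exp_le_one {z : ℂ} (hz : z.re ≤ 0) : ‖dslope exp 0 z‖ ≤ 1 := by
  rcases eq_or_ne z 0 with rfl | hz0
  · simp
  · rw [dslope_of_ne _ hz0, slope_def_field, exp_zero, sub_zero, norm_div]
    exact div_le_one_of_le₀ (norm_exp_sub_one_le_of_re_nonpos hz) (norm_nonneg _)

theorem Complex.continuous_dslope_exp : Continuous (dslope exp 0) :=
  continuousOn_univ.1 ((differentiableOn_dslope univ_mem).2
    differentiable_exp.differentiableOn).continuousOn

noncomputable def bMajorant (G : ℝ → ℝ) (p : ℝ × ℝ) : ℝ :=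
  √(G p.1) * √(G p.2) * |p.1 - p.2| / 2

theorem bKernel_eq_dslope (G : ℝ → ℝ) (k : ℂ) (p : ℝ × ℝ) :
    bKernel G k p = -(bMajorant G p : ℂ) * dslope exp 0 (I * k * |p.1 - p.2|) := by
  rcases eq_or_ne k 0 with rfl | hk
  · simp only [bKernel, if_pos, bMajorant, ofReal_div, ofReal_mul, ofReal_ofNat, mul_zero,
      zero_mul, dslope_same, Complex.deriv_exp, exp_zero, mul_one]
    ring
  rcases eq_or_ne (|p.1 - p.2|) 0 with ht | ht
  · simp [bKernel, bMajorant, ht]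
  have ht' : ((|p.1 - p.2| : ℝ) : ℂ) ≠ 0 := by exact_mod_cast ht
  rw [dslope_of_ne _ (by simp [hk, ht', I_ne_zero]), slope_def_field]
  simp only [bKernel, bMajorant, if_neg hk, exp_zero, sub_zero]
  push_cast
  field_simp
  ring

theorem norm_bKernel_le (G : ℝ → ℝ) {k : ℂ} (hk : 0 ≤ k.im) (p : ℝ × ℝ) :
    ‖bKernel G k p‖ ≤ bMajorant G p := by
  have hre : (I * k * |p.1 - p.2|).re ≤ 0 := by
    simpa using mul_nonneg hk (abs_nonneg (p.1 - p.2))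
  have h0 : 0 ≤ bMajorant G p := by unfold bMajorant; positivity
  rw [bKernel_eq_dslope, norm_mul, norm_neg, norm_real, Real.norm_of_nonneg h0]
  exact mul_le_of_le_one_right h0 (norm_dslope_exp_le_one hre)

theorem continuous_bKernel_apply (G : ℝ → ℝ) (p : ℝ × ℝ) : Continuous (bKernel G · p) := by
  simp_rw [bKernel_eq_dslope]
  have := continuous_dslope_exp
  fun_prop

theorem measurable_bKernel {G : ℝ → ℝ} (hG : Measurable G) (k : ℂ) :
    Measurable (bKernel G k) := by
  simp_rw [funext (bKernel_eq_dslope G k), bMajorant]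
  have := continuous_dslope_exp.measurable
  fun_prop

theorem integrable_mul_one_add_sq_of_decay {G : ℝ → ℝ} (hG0 : ∀ x, 0 ≤ G x) (hG : Measurable G)
    {C m : ℝ} (hm : 3 < m) (hdecay : ∀ x, G x ≤ C * √(1 + x ^ 2) ^ (-m)) :
    Integrable (fun x => G x * (1 + x ^ 2)) := by
  have hint : Integrable (fun x : ℝ => C * (1 + x ^ 2) ^ (-(m - 2) / 2)) := by
    refine (integrable_rpow_neg_one_add_norm_sq (E := ℝ) (r := m - 2) ?_).const_mul C |>.congr ?_
    · rw [Module.finrank_self, Nat.cast_one]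
      linarith
    · filter_upwards with x; simp [sq_abs]
  refine hint.mono' (by fun_prop) (ae_of_all _ fun x => ?_)
  have hx : 0 < 1 + x ^ 2 := by positivity
  have hpow : (1 + x ^ 2) ^ (-(m - 2) / 2) = √(1 + x ^ 2) ^ (-m) * (1 + x ^ 2) := by
    rw [Real.sqrt_eq_rpow, ← Real.rpow_mul hx.le, ← Real.rpow_add_one hx.ne']
    ring_nf
  rw [Real.norm_of_nonneg (mul_nonneg (hG0 x) hx.le), hpow, ← mul_assoc]
  exact mul_le_mul_of_nonneg_right (hdecay x) hx.le

theorem sq_sub_le_two_mul_one_add_sq_mul (x y : ℝ) :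
    (x - y) ^ 2 ≤ 2 * ((1 + x ^ 2) * (1 + y ^ 2)) := by
  nlinarith [sq_nonneg (x + y), sq_nonneg (x * y)]

theorem memLp_bMajorant {G : ℝ → ℝ} (hG0 : ∀ x, 0 ≤ G x) (hG : Measurable G)
    (hGint : Integrable (fun x => G x * (1 + x ^ 2))) :
    MemLp (bMajorant G) 2 (volume : Measure (ℝ × ℝ)) := by
  have hmeas : Measurable (bMajorant G) := by unfold bMajorant; fun_prop
  refine (memLp_two_iff_integrable_sq hmeas.aestronglyMeasurable).2 ?_
  have hprod :
      Integrable (fun p : ℝ × ℝ => (G p.1 * (1 + p.1 ^ 2)) * (G p.2 * (1 + p.2 ^ 2))) := by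
    rw [Measure.volume_eq_prod]
    exact hGint.mul_prod hGint
  refine (hprod.const_mul (1 / 2)).mono' (by fun_prop) (ae_of_all _ fun p => ?_)
  have hsq : bMajorant G p ^ 2 = G p.1 * G p.2 * (p.1 - p.2) ^ 2 / 4 := by
    simp only [bMajorant, div_pow, mul_pow, Real.sq_sqrt (hG0 _), sq_abs]
    norm_num
  rw [Real.norm_of_nonneg (sq_nonneg _), hsq]
  have := mul_le_mul_of_nonneg_left (sq_sub_le_two_mul_one_add_sq_mul p.1 p.2)
    (mul_nonneg (hG0 p.1) (hG0 p.2))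
  linarith

/-- if `G : ℝ → (0,∞)` satisfies `G(x) = O(⟨x⟩^{-m})` with `m > 3`, then for every
`k` in the closed upper half-plane the operator `b(k)` with the above kernel is Hilbert–Schmidt
(its kernel is in `L²(ℝ²)`), and `k ↦ b(k)` is continuous on `{Im k ≥ 0}` with values in the
Hilbert–Schmidt class (i.e. in `L²(ℝ²)`). -/
theorem stmt2 (G : ℝ → ℝ) (hGpos : ∀ x, 0 < G x) (hGmeas : Measurable G)
    (m : ℝ) (hm : 3 < m)
    (hGdecay : ∃ C : ℝ, 0 < C ∧ ∀ x : ℝ, G x ≤ C * (Real.sqrt (1 + x ^ 2)) ^ (-m)) :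
    (∀ k : ℂ, 0 ≤ k.im → MemLp (bKernel G k) 2 (volume : Measure (ℝ × ℝ))) ∧
    ∃ (F : ℂ → Lp ℂ 2 (volume : Measure (ℝ × ℝ))),
      (∀ k : ℂ, 0 ≤ k.im → (F k : ℝ × ℝ → ℂ) =ᵐ[volume] bKernel G k) ∧
      ContinuousOn F {k : ℂ | 0 ≤ k.im} := by
  obtain ⟨C, -, hdecay⟩ := hGdecay
  have hG0 : ∀ x, 0 ≤ G x := fun x => (hGpos x).le
  have hmaj : MemLp (bMajorant G) 2 volume :=
    memLp_bMajorant hG0 hGmeas (integrable_mul_one_add_sq_of_decay hG0 hGmeas hm hdecay)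
  have hmeas : ∀ k ∈ {k : ℂ | 0 ≤ k.im}, AEStronglyMeasurable (bKernel G k) volume :=
    fun k _ => (measurable_bKernel hGmeas k).aestronglyMeasurable
  have hbound : ∀ k ∈ {k : ℂ | 0 ≤ k.im}, ∀ᵐ p ∂volume, ‖bKernel G k p‖ ≤ bMajorant G p :=
    fun k hk => ae_of_all _ (norm_bKernel_le G hk)
  exact ⟨fun k hk => hmaj.mono' (hmeas k hk) (hbound k hk),
    exists_continuousOn_Lp_of_dominated ENNReal.ofNat_ne_top hmaj hmeas hbound
      (ae_of_all _ fun p => (continuous_bKernel_apply G p).continuousOn)⟩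
end

section
/- Let δ > 0 and define the sector C_δ := {k ∈ ℂ : −δ Im(k) ≤ |Re(k)|}. Let B ≥ 0 be a compact self-adjoint operator on a Hilbert space and α ∈ ℝ. Then for every k ∈ e^{iα} C_δ with k ≠ 0, the operator I + (i e^{iα}/k) B is invertible and ‖(I + (i e^{iα}/k) B)^{-1}‖ ≤ √(1 + δ^{-2}). -/
/-!
Writing `k = e^{iα} w`, the operator is `T = 1 + (i / w) • B`. For `x ∈ H` put `s = ‖x‖²` and
`t = ⟪x, B x⟫ ≥ 0`; then `⟪x, T x⟫ = (s w + t i) / w`. Adding `t i` with `t ≥ 0` to a point `s w` of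
the sector decreases its modulus by at most the factor `√(1 + δ⁻²)`, so
`‖x‖² ≤ √(1 + δ⁻²) ‖⟪T x, x⟫‖`. Such a coercivity bound on a Hilbert space makes `T` invertible,
and by Cauchy–Schwarz it gives `‖x‖ ≤ √(1 + δ⁻²) ‖T x‖`, i.e. the bound on `‖T⁻¹‖`.
-/

open Complex

def sector (δ : ℝ) : Set ℂ := {z | -δ * z.im ≤ |z.re|}

lemma ofReal_mul_mem_sector {δ s : ℝ} {z : ℂ} (hs : 0 ≤ s) (hz : z ∈ sector δ) :
    (s : ℂ) * z ∈ sector δ := by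
  change -δ * (s * z).im ≤ |(s * z).re|
  rw [re_ofReal_mul, im_ofReal_mul, abs_mul, abs_of_nonneg hs]
  nlinarith [hz.out]

lemma sq_add_sq_le_of_neg_mul_le_abs {δ a b t : ℝ} (hδ : 0 < δ) (ht : 0 ≤ t)
    (h : -δ * b ≤ |a|) : a ^ 2 + b ^ 2 ≤ (1 + δ⁻¹ ^ 2) * (a ^ 2 + (b + t) ^ 2) := by
  rcases le_or_gt 0 b with hb | hb
  · nlinarith [sq_nonneg δ⁻¹, sq_nonneg a, sq_nonneg (b + t)]
  · have hδb : δ * -b ≤ |a| := by linarith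
    have hb2 : b ^ 2 ≤ δ⁻¹ ^ 2 * a ^ 2 := by
      calc b ^ 2 = δ⁻¹ ^ 2 * (δ * -b) ^ 2 := by field_simp
        _ ≤ δ⁻¹ ^ 2 * |a| ^ 2 := by gcongr; nlinarith
        _ = δ⁻¹ ^ 2 * a ^ 2 := by rw [sq_abs]
    nlinarith [sq_nonneg (b + t), sq_nonneg δ⁻¹]

lemma norm_le_sqrt_mul_norm_add_mul_I {δ t : ℝ} {z : ℂ} (hδ : 0 < δ) (hz : z ∈ sector δ)
    (ht : 0 ≤ t) : ‖z‖ ≤ √(1 + δ⁻¹ ^ 2) * ‖z + t * I‖ := by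
  rw [← Real.sqrt_sq (norm_nonneg z), ← Real.sqrt_sq (norm_nonneg (z + t * I)),
    ← Real.sqrt_mul (by positivity)]
  gcongr
  simp only [Complex.sq_norm, normSq_apply, add_re, add_im, re_ofReal_mul, im_ofReal_mul, I_re,
    I_im]
  simpa [sq] using sq_add_sq_le_of_neg_mul_le_abs hδ ht hz.out

lemma le_sqrt_mul_norm_add_I_div_mul {δ s t : ℝ} {w : ℂ} (hδ : 0 < δ) (hw : w ∈ sector δ)
    (hw0 : w ≠ 0) (hs : 0 ≤ s) (ht : 0 ≤ t) :
    s ≤ √(1 + δ⁻¹ ^ 2) * ‖(s : ℂ) + I / w * t‖ := by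
  have hsw : (s : ℂ) + I / w * t = (s * w + t * I) / w := by field_simp
  have key := norm_le_sqrt_mul_norm_add_mul_I hδ (ofReal_mul_mem_sector hs hw) ht
  rw [norm_mul, norm_real, Real.norm_of_nonneg hs] at key
  rw [hsw, norm_div, mul_div_assoc', le_div_iff₀ (norm_pos_iff.mpr hw0)]
  exact key

namespace ContinuousLinearMap

variable {𝕜 E : Type*} [RCLike 𝕜] [NormedAddCommGroup E] [InnerProductSpace 𝕜 E]

lemma IsPositive.sq_norm_le_mul_norm_inner_one_add_smul {B : E →L[𝕜] E} (hB : B.IsPositive)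
    {c : 𝕜} {M : ℝ} (hc : ∀ s t : ℝ, 0 ≤ s → 0 ≤ t → s ≤ M * ‖(s : 𝕜) + c * t‖) (x : E) :
    ‖x‖ ^ 2 ≤ M * ‖inner 𝕜 ((1 + c • B) x) x‖ := by
  obtain ⟨t, ht, hxBx⟩ := RCLike.nonneg_iff_exists_ofReal.mp (hB.inner_nonneg_right x)
  have hinner : inner 𝕜 x ((1 + c • B) x) = ((‖x‖ ^ 2 : ℝ) : 𝕜) + c * t := by
    simp [inner_add_right, inner_smul_right, inner_self_eq_norm_sq_to_K, hxBx]
  rw [norm_inner_symm, hinner]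
  exact hc _ _ (by positivity) ht

lemma exists_inverse_norm_le_of_sq_norm_le [CompleteSpace E] {T : E →L[𝕜] E} {M : ℝ}
    (hM : 0 < M) (hT : ∀ x, ‖x‖ ^ 2 ≤ M * ‖inner 𝕜 (T x) x‖) :
    ∃ S : E →L[𝕜] E, T * S = 1 ∧ S * T = 1 ∧ ‖S‖ ≤ M := by
  obtain ⟨U, rfl⟩ : IsUnit T := by
    refine isUnit_of_forall_le_norm_inner_map T (c := M.toNNReal⁻¹) (by simpa) fun x => ?_
    rw [NNReal.coe_inv, Real.coe_toNNReal _ hM.le, ← div_eq_mul_inv, div_le_iff₀ hM, mul_comm]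
    exact hT x
  have hbound : ∀ x, ‖x‖ ≤ M * ‖(U : E →L[𝕜] E) x‖ := by
    intro x
    rcases (norm_nonneg x).eq_or_lt with hx | hx
    · rw [← hx]; positivity
    · refine le_of_mul_le_mul_right ?_ hx
      calc ‖x‖ * ‖x‖ = ‖x‖ ^ 2 := (sq _).symm
        _ ≤ M * ‖inner 𝕜 ((U : E →L[𝕜] E) x) x‖ := hT x
        _ ≤ M * (‖(U : E →L[𝕜] E) x‖ * ‖x‖) := by gcongr; exact norm_inner_le_norm _ _
        _ = M * ‖(U : E →L[𝕜] E) x‖ * ‖x‖ := by ring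
  refine ⟨↑U⁻¹, U.mul_inv, U.inv_mul, opNorm_le_bound _ hM.le fun y => ?_⟩
  calc ‖(↑U⁻¹ : E →L[𝕜] E) y‖ ≤ M * ‖(U : E →L[𝕜] E) ((↑U⁻¹ : E →L[𝕜] E) y)‖ := hbound _
    _ = M * ‖y‖ := congrArg (fun v => M * ‖v‖) (DFunLike.congr_fun U.mul_inv y)

end ContinuousLinearMap

theorem stmt4_general {H : Type*} [NormedAddCommGroup H] [InnerProductSpace ℂ H] [CompleteSpace H]
    (δ : ℝ) (hδ : 0 < δ)
    (B : H →L[ℂ] H) (hBpos : B.IsPositive)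
    (α : ℝ) (k : ℂ) (hk : k ≠ 0)
    (hkSec : ∃ w : ℂ, k = Complex.exp (Complex.I * α) * w ∧ -δ * w.im ≤ |w.re|) :
    ∃ Binv : H →L[ℂ] H,
      (1 + (Complex.I * Complex.exp (Complex.I * α) / k) • B) * Binv = 1 ∧
      Binv * (1 + (Complex.I * Complex.exp (Complex.I * α) / k) • B) = 1 ∧
      ‖Binv‖ ≤ Real.sqrt (1 + δ⁻¹ ^ 2) := by
  obtain ⟨w, rfl, hw⟩ := hkSec
  have hw0 : w ≠ 0 := right_ne_zero_of_mul hk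
  have hc : I * exp (I * α) / (exp (I * α) * w) = I / w := by
    field_simp [exp_ne_zero]
  rw [hc]
  exact ContinuousLinearMap.exists_inverse_norm_le_of_sq_norm_le (by positivity)
    (hBpos.sq_norm_le_mul_norm_inner_one_add_smul fun s t hs ht =>
      le_sqrt_mul_norm_add_I_div_mul hδ hw hw0 hs ht)

/-- let `δ > 0`, `C_δ = {k : −δ Im k ≤ |Re k|}`, `B ≥ 0` compact self-adjoint,
`α ∈ ℝ`. For every `k ∈ e^{iα} C_δ`, `k ≠ 0`, the operator `I + (i e^{iα}/k) B` is invertible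
with `‖(I + (i e^{iα}/k) B)⁻¹‖ ≤ √(1 + δ⁻²)`. -/
theorem stmt4 {H : Type*} [NormedAddCommGroup H] [InnerProductSpace ℂ H] [CompleteSpace H]
    (δ : ℝ) (hδ : 0 < δ)
    (B : H →L[ℂ] H) (hBpos : B.IsPositive) (hBcomp : IsCompactOperator B)
    (α : ℝ) (k : ℂ) (hk : k ≠ 0)
    (hkSec : ∃ w : ℂ, k = Complex.exp (Complex.I * α) * w ∧ -δ * w.im ≤ |w.re|) :
    ∃ Binv : H →L[ℂ] H,
      (1 + (Complex.I * Complex.exp (Complex.I * α) / k) • B) * Binv = 1 ∧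
      Binv * (1 + (Complex.I * Complex.exp (Complex.I * α) / k) • B) = 1 ∧
      ‖Binv‖ ≤ Real.sqrt (1 + δ⁻¹ ^ 2) :=
  stmt4_general δ hδ B hBpos α k hk hkSec
end

section
/- Let (μ_j)_{j≥1} be a nonincreasing sequence of positive real numbers converging to 0. Then there exists ν > 0 such that the set {j : μ_j − μ_{j+1} > ν μ_j} is infinite. -/
open Filter

/-- let `(μⱼ)` be a nonincreasing sequence of positive reals converging to `0`
(with an exponential decay bound `μⱼ ≤ C e^{-cj}`, as for eigenvalues of Toeplitz operators
with Gaussian-decaying symbol).  Then there exists `ν > 0` such that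
`{j : μⱼ − μ_{j+1} > ν μⱼ}` is infinite. -/
theorem stmt11 (μ : ℕ → ℝ) (hpos : ∀ j, 0 < μ j) (hmono : Antitone μ)
    (hlim : Tendsto μ atTop (nhds 0))
    (C c : ℝ) (hC : 0 < C) (hc : 0 < c)
    (hdecay : ∀ j : ℕ, μ j ≤ C * Real.exp (-c * j)) :
    ∃ ν : ℝ, 0 < ν ∧ {j : ℕ | μ j - μ (j + 1) > ν * μ j}.Infinite := by
  set q : ℝ := Real.exp (-c / 2) with hq
  have hq1 : q < 1 := by
    rw [hq, Real.exp_lt_one_iff]; linarith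
  have hq0 : 0 < q := Real.exp_pos _
  refine ⟨1 - q, by linarith, ?_⟩
  by_contra hfin
  rw [Set.not_infinite] at hfin
  obtain ⟨N, hN⟩ := hfin.bddAbove
  -- for all j > N, μ (j+1) ≥ q * μ j
  have key : ∀ j, N < j → q * μ j ≤ μ (j + 1) := by
    intro j hj
    by_contra h
    push_neg at h
    have hjmem : j ∈ {j : ℕ | μ j - μ (j + 1) > (1 - q) * μ j} := by
      simp only [Set.mem_setOf_eq]; nlinarith
    exact absurd (hN hjmem) (by omega)
  have geom : ∀ k : ℕ, q ^ k * μ (N + 1) ≤ μ (N + 1 + k) := by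
    intro k
    induction k with
    | zero => simp
    | succ n ih =>
      have h1 := key (N + 1 + n) (by omega)
      calc q ^ (n + 1) * μ (N + 1) = q * (q ^ n * μ (N + 1)) := by ring
        _ ≤ q * μ (N + 1 + n) := by nlinarith
        _ ≤ μ (N + 1 + (n + 1)) := by
            have : N + 1 + (n + 1) = (N + 1 + n) + 1 := by omega
            rw [this]; exact h1
  -- combine with decay bound
  have hcontra : ∀ k : ℕ, q ^ k * μ (N + 1) ≤ C * Real.exp (-c * (N + 1)) * q ^ k * q ^ k := by
    intro k
    have h1 := geom k
    have h2 := hdecay (N + 1 + k)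
    have hqk : q ^ k = Real.exp (-c / 2 * k) := by
      rw [hq, ← Real.exp_nat_mul]; ring_nf
    have he : Real.exp (-c * ((N + 1 + k : ℕ) : ℝ)) =
        Real.exp (-c * (N + 1)) * q ^ k * q ^ k := by
      rw [hqk, ← Real.exp_add, ← Real.exp_add]
      congr 1
      push_cast
      ring
    calc q ^ k * μ (N + 1) ≤ μ (N + 1 + k) := h1
      _ ≤ C * Real.exp (-c * ((N + 1 + k : ℕ) : ℝ)) := h2
      _ = C * Real.exp (-c * (N + 1)) * q ^ k * q ^ k := by rw [he]; ring
  have hmu : ∀ k : ℕ, μ (N + 1) ≤ C * Real.exp (-c * (N + 1)) * q ^ k := by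
    intro k
    have h := hcontra k
    have hqkpos : 0 < q ^ k := pow_pos hq0 k
    nlinarith
  -- q^k → 0
  have hto : Tendsto (fun k : ℕ => C * Real.exp (-c * (N + 1)) * q ^ k) atTop (nhds 0) := by
    have := tendsto_pow_atTop_nhds_zero_of_lt_one (le_of_lt hq0) hq1
    simpa using this.const_mul (C * Real.exp (-c * (N + 1)))
  have hle : μ (N + 1) ≤ 0 :=
    ge_of_tendsto hto (Eventually.of_forall hmu)
  exact absurd hle (not_le.mpr (hpos (N + 1)))
end
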